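/- arXiv:2406.08395 — 4 statements merged into one kernel-verified Lean document; each statement's English description precedes it below -/
import Mathlib

section
/- Let S be a nonempty finite set, let P be a nonempty set of probability mass functions on S, let c ∈ ℝ, let γ ∈ [0,1), and let V₁, V₂ : S → ℝ. Then |inf_{p ∈ P} (c + γ · Σ_{s ∈ S} p(s) · V₁(s)) − inf_{p ∈ P} (c + γ · Σ_{s ∈ S} p(s) · V₂(s))| ≤ γ · max_{s ∈ S} |V₁(s) − V₂(s)|. -/
/-! Each value `c + γ · E_p V` is affine in `V` with slope `γ` along a probability vector, so for a
fixed `p` the values for `V₁` and `V₂` differ by at most `γ · ‖V₁ - V₂‖_∞`. A uniform bound on the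
difference of two families of reals passes to their infima. -/

namespace PMF

variable {S : Type*} [Fintype S]

lemma sum_toReal_eq_one (p : PMF S) : ∑ s, (p s).toReal = 1 := by
  rw [← ENNReal.toReal_sum fun s _ => p.apply_ne_top s, ← tsum_fintype (L := .unconditional _),
    p.tsum_coe, ENNReal.toReal_one]

lemma abs_sum_toReal_mul_le_iSup_abs [Nonempty S] (p : PMF S) (W : S → ℝ) :
    |∑ s, (p s).toReal * W s| ≤ ⨆ s, |W s| :=
  calc |∑ s, (p s).toReal * W s|
      _ ≤ ∑ s, |(p s).toReal * W s| := Finset.abs_sum_le_sum_abs _ _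
      _ = ∑ s, (p s).toReal * |W s| := by simp only [abs_mul, ENNReal.abs_toReal]
      _ ≤ ∑ s, (p s).toReal * ⨆ t, |W t| := by
        gcongr with s
        exact le_ciSup (Set.finite_range fun t => |W t|).bddAbove s
      _ = ⨆ t, |W t| := by rw [← Finset.sum_mul, p.sum_toReal_eq_one, one_mul]

lemma abs_add_mul_sum_toReal_mul_sub_le [Nonempty S] (p : PMF S) (c : ℝ) {γ : ℝ} (hγ : 0 ≤ γ)
    (V W : S → ℝ) :
    |(c + γ * ∑ s, (p s).toReal * V s) - (c + γ * ∑ s, (p s).toReal * W s)| ≤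
      γ * ⨆ s, |V s - W s| := by
  have hsum : ∑ s, (p s).toReal * V s - ∑ s, (p s).toReal * W s =
      ∑ s, (p s).toReal * (V s - W s) := by
    simp only [mul_sub, Finset.sum_sub_distrib]
  rw [add_sub_add_left_eq_sub, ← mul_sub, hsum, abs_mul, abs_of_nonneg hγ]
  exact mul_le_mul_of_nonneg_left (p.abs_sum_toReal_mul_le_iSup_abs _) hγ

end PMF

section Real

variable {α : Type*} {s : Set α} {f g : α → ℝ} {ε : ℝ}

lemma sInf_image_le_sInf_image_add (hs : s.Nonempty) (hf : BddBelow (f '' s))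
    (hfg : ∀ a ∈ s, f a ≤ g a + ε) : sInf (f '' s) ≤ sInf (g '' s) + ε := by
  rw [← sub_le_iff_le_add]
  refine le_csInf (hs.image g) ?_
  rintro _ ⟨a, ha, rfl⟩
  linarith [csInf_le hf (Set.mem_image_of_mem f ha), hfg a ha]

lemma abs_sInf_image_sub_sInf_image_le (hs : s.Nonempty) (hf : BddBelow (f '' s))
    (hg : BddBelow (g '' s)) (hfg : ∀ a ∈ s, |f a - g a| ≤ ε) :
    |sInf (f '' s) - sInf (g '' s)| ≤ ε := by
  rw [abs_sub_le_iff]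
  constructor
  · linarith [sInf_image_le_sInf_image_add hs hf fun a ha =>
      sub_le_iff_le_add'.mp (abs_sub_le_iff.mp (hfg a ha)).1]
  · linarith [sInf_image_le_sInf_image_add hs hg fun a ha =>
      sub_le_iff_le_add'.mp (abs_sub_le_iff.mp (hfg a ha)).2]

end Real

theorem inf_expectation_abs_sub_le_general {S : Type*} [Fintype S] [Nonempty S]
    (P : Set (PMF S)) (hP : P.Nonempty)
    (c γ : ℝ) (hγ0 : 0 ≤ γ)
    (V₁ V₂ : S → ℝ) :
    |sInf ((fun p : PMF S => c + γ * ∑ s : S, (p s).toReal * V₁ s) '' P) -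
        sInf ((fun p : PMF S => c + γ * ∑ s : S, (p s).toReal * V₂ s) '' P)| ≤
      γ * ⨆ s : S, |V₁ s - V₂ s| := by
  -- Comparing with `W = 0`, whose value is the constant `c`, bounds each family from below.
  have hbdd : ∀ V : S → ℝ, BddBelow ((fun p : PMF S => c + γ * ∑ s, (p s).toReal * V s) '' P) := by
    intro V
    refine ⟨c - γ * ⨆ s, |V s|, ?_⟩
    rintro _ ⟨p, -, rfl⟩
    have := (abs_sub_le_iff.mp (p.abs_add_mul_sum_toReal_mul_sub_le c hγ0 V 0)).2
    simp only [Pi.zero_apply, mul_zero, Finset.sum_const_zero, add_zero, sub_zero] at this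
    linarith
  exact abs_sInf_image_sub_sInf_image_le hP (hbdd V₁) (hbdd V₂) fun p _ =>
    p.abs_add_mul_sum_toReal_mul_sub_le c hγ0 V₁ V₂

/-- For a nonempty finite set `S`, a nonempty set `P` of probability mass
functions on `S`, a constant `c : ℝ`, a discount `γ ∈ [0,1)`, and functions `V₁ V₂ : S → ℝ`,
the infima over `p ∈ P` of `c + γ · ∑ₛ p(s) V(s)` for `V = V₁, V₂` are at distance at most
`γ · max_{s ∈ S} |V₁ s - V₂ s|`. -/
theorem inf_expectation_abs_sub_le {S : Type*} [Fintype S] [Nonempty S]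
    (P : Set (PMF S)) (hP : P.Nonempty)
    (c γ : ℝ) (hγ0 : 0 ≤ γ) (hγ1 : γ < 1)
    (V₁ V₂ : S → ℝ) :
    |sInf ((fun p : PMF S => c + γ * ∑ s : S, (p s).toReal * V₁ s) '' P) -
        sInf ((fun p : PMF S => c + γ * ∑ s : S, (p s).toReal * V₂ s) '' P)| ≤
      γ * ⨆ s : S, |V₁ s - V₂ s| :=
  inf_expectation_abs_sub_le_general P hP c γ hγ0 V₁ V₂
end

section
/- Let S and A be nonempty finite sets, let (Ψ, +) be a normed additive commutative group, let B ⊆ Ψ be a nonempty set, let γ ∈ [0,1), let r : S × A → ℝ be a bounded reward function, let p : Ψ → S → A → PMF(S) be a family of transition kernels indexed by the parameter ψ ∈ Ψ, and let π : S × Ψ → PMF(A) be a policy. Define the time-constrained robust Bellman operator T_B^π on bounded functions V : S × Ψ → ℝ by (T_B^π V)(s, ψ) = inf_{b ∈ B} Σ_{a ∈ A} π(s,ψ)(a) · ( r(s,a) + γ · Σ_{s' ∈ S} p(ψ+b)(s,a)(s') · V(s', ψ+b) ). Then T_B^π is a γ-contraction in the supremum norm: for all bounded V₁, V₂ : S ×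 Ψ → ℝ, sup_{(s,ψ)} |T_B^π V₁(s,ψ) − T_B^π V₂(s,ψ)| ≤ γ · sup_{(s,ψ)} |V₁(s,ψ) − V₂(s,ψ)|. -/
noncomputable section

/-- The time-constrained robust Bellman operator `T_B^π` for policy `π`:
`(T_B^π V)(s, ψ) = inf_{b ∈ B} ∑_a π(s,ψ)(a) (r(s,a) + γ ∑_{s'} p_{ψ+b}(s,a)(s') V(s', ψ+b))`. -/
def TBpi {S A Ψ : Type*} [Fintype S] [Fintype A] [NormedAddCommGroup Ψ]
    (B : Set Ψ) (γ : ℝ) (r : S × A → ℝ) (p : Ψ → S → A → PMF S)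
    (π : S × Ψ → PMF A) (V : S × Ψ → ℝ) : S × Ψ → ℝ :=
  fun x =>
    sInf ((fun b : Ψ =>
      ∑ a : A, ((π x) a).toReal *
        (r (x.1, a) + γ * ∑ s' : S, ((p (x.2 + b) x.1 a) s').toReal * V (s', x.2 + b))) '' B)

lemma pmf_sum_toReal_eq_one {α : Type*} [Fintype α] (q : PMF α) :
    ∑ a : α, (q a).toReal = 1 := by
  have h := q.tsum_coe
  rw [tsum_fintype] at h
  rw [← ENNReal.toReal_sum (fun a _ => q.apply_ne_top a), h, ENNReal.toReal_one]

/-- Bound on a single value of the pre-inf expression. -/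
lemma TBpi_term_bound {S A Ψ : Type*} [Fintype S] [Fintype A] [NormedAddCommGroup Ψ]
    {γ : ℝ} (hγ0 : 0 ≤ γ) (r : S × A → ℝ) {Cr : ℝ} (hr : ∀ x, |r x| ≤ Cr)
    (p : Ψ → S → A → PMF S) (π : S × Ψ → PMF A)
    (V : S × Ψ → ℝ) {CV : ℝ} (hV : ∀ x, |V x| ≤ CV) (x : S × Ψ) (b : Ψ) :
    |∑ a : A, ((π x) a).toReal *
        (r (x.1, a) + γ * ∑ s' : S, ((p (x.2 + b) x.1 a) s').toReal * V (s', x.2 + b))|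
      ≤ Cr + γ * CV := by
  have hCV : 0 ≤ CV := le_trans (abs_nonneg _) (hV (x.1, x.2))
  calc |∑ a : A, ((π x) a).toReal *
        (r (x.1, a) + γ * ∑ s' : S, ((p (x.2 + b) x.1 a) s').toReal * V (s', x.2 + b))|
      ≤ ∑ a : A, |((π x) a).toReal *
        (r (x.1, a) + γ * ∑ s' : S, ((p (x.2 + b) x.1 a) s').toReal * V (s', x.2 + b))| :=
        Finset.abs_sum_le_sum_abs _ _
    _ ≤ ∑ a : A, ((π x) a).toReal * (Cr + γ * CV) := by
        apply Finset.sum_le_sum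
        intro a _
        rw [abs_mul, abs_of_nonneg ENNReal.toReal_nonneg]
        apply mul_le_mul_of_nonneg_left _ ENNReal.toReal_nonneg
        refine le_trans (abs_add_le _ _) (add_le_add (hr _) ?_)
        rw [abs_mul, abs_of_nonneg hγ0]
        apply mul_le_mul_of_nonneg_left _ hγ0
        calc |∑ s' : S, ((p (x.2 + b) x.1 a) s').toReal * V (s', x.2 + b)|
            ≤ ∑ s' : S, |((p (x.2 + b) x.1 a) s').toReal * V (s', x.2 + b)| :=
              Finset.abs_sum_le_sum_abs _ _
          _ ≤ ∑ s' : S, ((p (x.2 + b) x.1 a) s').toReal * CV := by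
              apply Finset.sum_le_sum
              intro s' _
              rw [abs_mul, abs_of_nonneg ENNReal.toReal_nonneg]
              exact mul_le_mul_of_nonneg_left (hV _) ENNReal.toReal_nonneg
          _ = CV := by rw [← Finset.sum_mul, pmf_sum_toReal_eq_one, one_mul]
    _ = Cr + γ * CV := by rw [← Finset.sum_mul, pmf_sum_toReal_eq_one, one_mul]

/-- Key pointwise estimate: the pre-inf expressions for `V₁` and `V₂` differ by at most `γ * M`. -/
lemma TBpi_term_diff {S A Ψ : Type*} [Fintype S] [Fintype A] [NormedAddCommGroup Ψ]
    {γ : ℝ} (hγ0 : 0 ≤ γ) (r : S × A → ℝ)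
    (p : Ψ → S → A → PMF S) (π : S × Ψ → PMF A)
    (V₁ V₂ : S × Ψ → ℝ) {M : ℝ} (hM : ∀ y, |V₁ y - V₂ y| ≤ M) (x : S × Ψ) (b : Ψ) :
    |(∑ a : A, ((π x) a).toReal *
        (r (x.1, a) + γ * ∑ s' : S, ((p (x.2 + b) x.1 a) s').toReal * V₁ (s', x.2 + b)))
      - ∑ a : A, ((π x) a).toReal *
        (r (x.1, a) + γ * ∑ s' : S, ((p (x.2 + b) x.1 a) s').toReal * V₂ (s', x.2 + b))|
      ≤ γ * M := by
  have hMnn : 0 ≤ M := le_trans (abs_nonneg _) (hM (x.1, x.2))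
  have hstep : (∑ a : A, ((π x) a).toReal *
        (r (x.1, a) + γ * ∑ s' : S, ((p (x.2 + b) x.1 a) s').toReal * V₁ (s', x.2 + b)))
      - ∑ a : A, ((π x) a).toReal *
        (r (x.1, a) + γ * ∑ s' : S, ((p (x.2 + b) x.1 a) s').toReal * V₂ (s', x.2 + b))
      = ∑ a : A, ((π x) a).toReal * γ *
          ∑ s' : S, ((p (x.2 + b) x.1 a) s').toReal *
            (V₁ (s', x.2 + b) - V₂ (s', x.2 + b)) := by
    rw [← Finset.sum_sub_distrib]
    apply Finset.sum_congr rfl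
    intro a _
    have hinner : (∑ s' : S, ((p (x.2 + b) x.1 a) s').toReal * V₁ (s', x.2 + b))
        - ∑ s' : S, ((p (x.2 + b) x.1 a) s').toReal * V₂ (s', x.2 + b)
        = ∑ s' : S, ((p (x.2 + b) x.1 a) s').toReal *
            (V₁ (s', x.2 + b) - V₂ (s', x.2 + b)) := by
      rw [← Finset.sum_sub_distrib]
      exact Finset.sum_congr rfl fun s' _ => (mul_sub _ _ _).symm
    rw [← hinner]; ring
  rw [hstep]
  calc |∑ a : A, ((π x) a).toReal * γ *
          ∑ s' : S, ((p (x.2 + b) x.1 a) s').toReal *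
            (V₁ (s', x.2 + b) - V₂ (s', x.2 + b))|
      ≤ ∑ a : A, |((π x) a).toReal * γ *
          ∑ s' : S, ((p (x.2 + b) x.1 a) s').toReal *
            (V₁ (s', x.2 + b) - V₂ (s', x.2 + b))| := Finset.abs_sum_le_sum_abs _ _
    _ ≤ ∑ a : A, ((π x) a).toReal * γ * M := by
        apply Finset.sum_le_sum
        intro a _
        rw [abs_mul, abs_of_nonneg (mul_nonneg ENNReal.toReal_nonneg hγ0)]
        apply mul_le_mul_of_nonneg_left _ (mul_nonneg ENNReal.toReal_nonneg hγ0)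
        calc |∑ s' : S, ((p (x.2 + b) x.1 a) s').toReal *
              (V₁ (s', x.2 + b) - V₂ (s', x.2 + b))|
            ≤ ∑ s' : S, |((p (x.2 + b) x.1 a) s').toReal *
              (V₁ (s', x.2 + b) - V₂ (s', x.2 + b))| := Finset.abs_sum_le_sum_abs _ _
          _ ≤ ∑ s' : S, ((p (x.2 + b) x.1 a) s').toReal * M := by
              apply Finset.sum_le_sum
              intro s' _
              rw [abs_mul, abs_of_nonneg ENNReal.toReal_nonneg]
              exact mul_le_mul_of_nonneg_left (hM _) ENNReal.toReal_nonneg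
          _ = M := by rw [← Finset.sum_mul, pmf_sum_toReal_eq_one, one_mul]
    _ = γ * M := by
        simp_rw [mul_assoc]
        rw [← Finset.sum_mul, pmf_sum_toReal_eq_one, one_mul]

/-- The time-constrained robust Bellman operator `T_B^π` is a `γ`-contraction
in the supremum norm on bounded functions `S × Ψ → ℝ`. -/
theorem TBpi_contraction {S A Ψ : Type*} [Fintype S] [Fintype A] [Nonempty S] [Nonempty A]
    [NormedAddCommGroup Ψ]
    (B : Set Ψ) (hB : B.Nonempty)
    (γ : ℝ) (hγ0 : 0 ≤ γ) (hγ1 : γ < 1)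
    (r : S × A → ℝ) (hr : ∃ C : ℝ, ∀ x, |r x| ≤ C)
    (p : Ψ → S → A → PMF S) (π : S × Ψ → PMF A)
    (V₁ V₂ : S × Ψ → ℝ)
    (hV₁ : ∃ C : ℝ, ∀ x, |V₁ x| ≤ C) (hV₂ : ∃ C : ℝ, ∀ x, |V₂ x| ≤ C) :
    ⨆ x : S × Ψ, |TBpi B γ r p π V₁ x - TBpi B γ r p π V₂ x| ≤
      γ * ⨆ x : S × Ψ, |V₁ x - V₂ x| := by
  obtain ⟨Cr, hCr⟩ := hr
  obtain ⟨C₁, hC₁⟩ := hV₁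
  obtain ⟨C₂, hC₂⟩ := hV₂
  set M : ℝ := ⨆ x : S × Ψ, |V₁ x - V₂ x| with hMdef
  have hbdd : BddAbove (Set.range fun x : S × Ψ => |V₁ x - V₂ x|) := by
    refine ⟨C₁ + C₂, ?_⟩
    rintro y ⟨x, rfl⟩
    exact le_trans (abs_sub _ _) (add_le_add (hC₁ x) (hC₂ x))
  have hM : ∀ y : S × Ψ, |V₁ y - V₂ y| ≤ M := fun y => le_ciSup hbdd y
  -- pointwise bound for each x
  have hpt : ∀ x : S × Ψ, |TBpi B γ r p π V₁ x - TBpi B γ r p π V₂ x| ≤ γ * M := by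
    intro x
    set f₁ : Ψ → ℝ := fun b =>
      ∑ a : A, ((π x) a).toReal *
        (r (x.1, a) + γ * ∑ s' : S, ((p (x.2 + b) x.1 a) s').toReal * V₁ (s', x.2 + b))
      with hf₁
    set f₂ : Ψ → ℝ := fun b =>
      ∑ a : A, ((π x) a).toReal *
        (r (x.1, a) + γ * ∑ s' : S, ((p (x.2 + b) x.1 a) s').toReal * V₂ (s', x.2 + b))
      with hf₂
    have hbd₁ : BddBelow (f₁ '' B) := by
      refine ⟨-(Cr + γ * C₁), ?_⟩
      rintro y ⟨b, _, rfl⟩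
      exact neg_le_of_abs_le (TBpi_term_bound hγ0 r hCr p π V₁ hC₁ x b)
    have hbd₂ : BddBelow (f₂ '' B) := by
      refine ⟨-(Cr + γ * C₂), ?_⟩
      rintro y ⟨b, _, rfl⟩
      exact neg_le_of_abs_le (TBpi_term_bound hγ0 r hCr p π V₂ hC₂ x b)
    have hdiff : ∀ b : Ψ, |f₁ b - f₂ b| ≤ γ * M := fun b =>
      TBpi_term_diff hγ0 r p π V₁ V₂ hM x b
    have h1 : sInf (f₁ '' B) ≤ sInf (f₂ '' B) + γ * M := by
      rw [← sub_le_iff_le_add]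
      apply le_csInf (hB.image f₂)
      rintro y ⟨b, hb, rfl⟩
      have := csInf_le hbd₁ (Set.mem_image_of_mem f₁ hb)
      have h2 := (abs_sub_le_iff.mp (hdiff b)).1
      linarith
    have h2 : sInf (f₂ '' B) ≤ sInf (f₁ '' B) + γ * M := by
      rw [← sub_le_iff_le_add]
      apply le_csInf (hB.image f₁)
      rintro y ⟨b, hb, rfl⟩
      have := csInf_le hbd₂ (Set.mem_image_of_mem f₂ hb)
      have h3 := (abs_sub_le_iff.mp (hdiff b)).2
      linarith
    have : TBpi B γ r p π V₁ x = sInf (f₁ '' B) := rfl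
    rw [this]
    have : TBpi B γ r p π V₂ x = sInf (f₂ '' B) := rfl
    rw [this]
    rw [abs_sub_le_iff]
    constructor <;> linarith
  exact ciSup_le hpt
end
end

section
/- Let S and A be nonempty finite sets, let (Ψ, +) be a normed additive commutative group, let B ⊆ Ψ be a nonempty set, let γ ∈ [0,1), let r : S × A → ℝ be a bounded reward function, and let p : Ψ → S → A → PMF(S) be a family of transition kernels. Define the optimal time-constrained robust Bellman operator T_B^* on bounded functions V : S × Ψ → ℝ by (T_B^* V)(s, ψ) = sup_{μ ∈ PMF(A)} inf_{b ∈ B} Σ_{a ∈ A} μ(a) · ( r(s,a) + γ · Σ_{s' ∈ S} p(ψ+b)(s,a)(s') · V(s', ψ+b) ). Then T_B^* is a γ-contraction in the supremum norm: for all bounded V₁, V₂ : S × Ψ → ℝ, sup_{(s,ψ)} |T_B^* V₁(s,ψ) − T_B^* V₂(s,ψ)| ≤ γ · sup_{(s,ψ)} |V₁(s,ψ) − V₂(s,ψ)|. -/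
noncomputable section

/-- The optimal time-constrained robust Bellman operator `T_B^*`:
`(T_B^* V)(s, ψ) = sup_{μ ∈ PMF(A)} inf_{b ∈ B} ∑_a μ(a) (r(s,a) + γ ∑_{s'} p_{ψ+b}(s,a)(s') V(s', ψ+b))`. -/
def TBstar {S A Ψ : Type*} [Fintype S] [Fintype A] [NormedAddCommGroup Ψ]
    (B : Set Ψ) (γ : ℝ) (r : S × A → ℝ) (p : Ψ → S → A → PMF S)
    (V : S × Ψ → ℝ) : S × Ψ → ℝ :=
  fun x =>
    ⨆ μ : PMF A, sInf ((fun b : Ψ =>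
      ∑ a : A, (μ a).toReal *
        (r (x.1, a) + γ * ∑ s' : S, ((p (x.2 + b) x.1 a) s').toReal * V (s', x.2 + b))) '' B)

/-!
For a fixed state the Bellman update is a max–min over the agent's mixed action and the
adversary's parameter change of a payoff that depends on `V` only through a `γ`-discounted
average of its values. Such an average moves by at most `γ‖V₁ - V₂‖∞`, and taking an infimum and
then a supremum of bounded families is `1`-Lipschitz in the supremum norm.
-/

open Set

section SupInf

variable {ι κ : Type*} {c : ℝ}

lemma abs_ciSup_sub_ciSup_le [Nonempty ι] {f g : ι → ℝ} (hf : BddAbove (range f))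
    (hg : BddAbove (range g)) (h : ∀ i, |f i - g i| ≤ c) : |(⨆ i, f i) - ⨆ i, g i| ≤ c := by
  rw [abs_sub_le_iff, sub_le_iff_le_add, sub_le_iff_le_add]
  constructor
  · exact ciSup_le fun i => by linarith [(abs_sub_le_iff.1 (h i)).1, le_ciSup hg i]
  · exact ciSup_le fun i => by linarith [(abs_sub_le_iff.1 (h i)).2, le_ciSup hf i]

lemma abs_ciInf_sub_ciInf_le [Nonempty ι] {f g : ι → ℝ} (hf : BddBelow (range f))
    (hg : BddBelow (range g)) (h : ∀ i, |f i - g i| ≤ c) : |(⨅ i, f i) - ⨅ i, g i| ≤ c := by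
  rw [abs_sub_le_iff, sub_le_comm, sub_le_comm (a := ⨅ i, g i)]
  constructor
  · exact le_ciInf fun i => by linarith [(abs_sub_le_iff.1 (h i)).1, ciInf_le hf i]
  · exact le_ciInf fun i => by linarith [(abs_sub_le_iff.1 (h i)).2, ciInf_le hg i]

lemma abs_iSup_iInf_sub_le {f g : ι → κ → ℝ} {M : ℝ} (hc : 0 ≤ c) (hg : ∀ i j, |g i j| ≤ M)
    (hfg : ∀ i j, |f i j - g i j| ≤ c) :
    |(⨆ i, ⨅ j, f i j) - ⨆ i, ⨅ j, g i j| ≤ c := by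
  rcases isEmpty_or_nonempty ι with hι | hι
  · simpa using hc
  rcases isEmpty_or_nonempty κ with hκ | hκ
  · simpa using hc
  have hf : ∀ i j, |f i j| ≤ M + c := fun i j => by
    linarith [abs_sub_abs_le_abs_sub (f i j) (g i j), hg i j, hfg i j]
  have bounds : ∀ (F : ι → κ → ℝ) (K : ℝ), (∀ i j, |F i j| ≤ K) →
      (∀ i, BddBelow (range (F i))) ∧ BddAbove (range fun i => ⨅ j, F i j) := by
    intro F K hK
    have below : ∀ i, BddBelow (range (F i)) := fun i =>
      ⟨-K, by rintro _ ⟨j, rfl⟩; exact neg_le_of_abs_le (hK i j)⟩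
    refine ⟨below, K, ?_⟩
    rintro _ ⟨i, rfl⟩
    exact ciInf_le_of_le (below i) (Classical.arbitrary κ) (le_of_abs_le (hK i _))
  obtain ⟨hf₁, hf₂⟩ := bounds f _ hf
  obtain ⟨hg₁, hg₂⟩ := bounds g _ hg
  exact abs_ciSup_sub_ciSup_le hf₂ hg₂ fun i => abs_ciInf_sub_ciInf_le (hf₁ i) (hg₁ i) (hfg i)

end SupInf

lemma PMF.sum_toReal_eq_one_s2 {α : Type*} [Fintype α] (μ : PMF α) : ∑ a, (μ a).toReal = 1 := by
  rw [← ENNReal.toReal_sum fun a _ => μ.apply_ne_top a,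
    ← tsum_fintype (L := SummationFilter.unconditional _), μ.tsum_coe, ENNReal.toReal_one]

lemma PMF.abs_sum_toReal_mul_le {α : Type*} [Fintype α] (μ : PMF α) {f : α → ℝ} {c : ℝ}
    (h : ∀ a, |f a| ≤ c) : |∑ a, (μ a).toReal * f a| ≤ c :=
  calc |∑ a, (μ a).toReal * f a| ≤ ∑ a, (μ a).toReal * |f a| := by
        simpa only [abs_mul, ENNReal.abs_toReal] using
          Finset.abs_sum_le_sum_abs (fun a => (μ a).toReal * f a) Finset.univ
    _ ≤ ∑ a, (μ a).toReal * c :=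
        Finset.sum_le_sum fun a _ => mul_le_mul_of_nonneg_left (h a) ENNReal.toReal_nonneg
    _ = c := by rw [← Finset.sum_mul, μ.sum_toReal_eq_one_s2, one_mul]

section Payoff

variable {S A Ψ : Type*} [Fintype S] [Fintype A] [Add Ψ]

def TBstarPayoff (γ : ℝ) (r : S × A → ℝ) (p : Ψ → S → A → PMF S)
    (V : S × Ψ → ℝ) (x : S × Ψ) (μ : PMF A) (b : Ψ) : ℝ :=
  ∑ a, (μ a).toReal * (r (x.1, a) + γ * ∑ s', (p (x.2 + b) x.1 a s').toReal * V (s', x.2 + b))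

variable {γ : ℝ} {r : S × A → ℝ} {p : Ψ → S → A → PMF S} {V V₁ V₂ : S × Ψ → ℝ}

lemma abs_TBstarPayoff_le {Cr C : ℝ} (hγ : 0 ≤ γ) (hr : ∀ y, |r y| ≤ Cr)
    (hV : ∀ y, |V y| ≤ C) (x : S × Ψ) (μ : PMF A) (b : Ψ) :
    |TBstarPayoff γ r p V x μ b| ≤ Cr + γ * C := by
  refine μ.abs_sum_toReal_mul_le fun a => (abs_add_le _ _).trans (add_le_add (hr _) ?_)
  rw [abs_mul, abs_of_nonneg hγ]
  exact mul_le_mul_of_nonneg_left ((p _ _ _).abs_sum_toReal_mul_le fun s' => hV _) hγ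

lemma abs_TBstarPayoff_sub_le {D : ℝ} (hγ : 0 ≤ γ) (hV : ∀ y, |V₁ y - V₂ y| ≤ D)
    (x : S × Ψ) (μ : PMF A) (b : Ψ) :
    |TBstarPayoff γ r p V₁ x μ b - TBstarPayoff γ r p V₂ x μ b| ≤ γ * D := by
  have hsub : TBstarPayoff γ r p V₁ x μ b - TBstarPayoff γ r p V₂ x μ b =
      ∑ a, (μ a).toReal * (γ * ∑ s', (p (x.2 + b) x.1 a s').toReal *
        (V₁ (s', x.2 + b) - V₂ (s', x.2 + b))) := by
    simp only [TBstarPayoff, ← Finset.sum_sub_distrib, ← mul_sub, add_sub_add_left_eq_sub]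
  rw [hsub]
  refine μ.abs_sum_toReal_mul_le fun a => ?_
  rw [abs_mul, abs_of_nonneg hγ]
  exact mul_le_mul_of_nonneg_left ((p _ _ _).abs_sum_toReal_mul_le fun s' => hV _) hγ

end Payoff

section Bellman

variable {S A Ψ : Type*} [Fintype S] [Fintype A] [NormedAddCommGroup Ψ] {B : Set Ψ} {γ : ℝ}
  {r : S × A → ℝ} {p : Ψ → S → A → PMF S}

lemma TBstar_eq_iSup_iInf (V : S × Ψ → ℝ) (x : S × Ψ) :
    TBstar B γ r p V x = ⨆ μ : PMF A, ⨅ b : B, TBstarPayoff γ r p V x μ b := by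
  simp only [TBstar, TBstarPayoff, sInf_image']

lemma abs_TBstar_sub_le {V₁ V₂ : S × Ψ → ℝ} {Cr C D : ℝ} (hγ : 0 ≤ γ) (hr : ∀ y, |r y| ≤ Cr)
    (hV₂ : ∀ y, |V₂ y| ≤ C) (hV : ∀ y, |V₁ y - V₂ y| ≤ D) (hD : 0 ≤ D) (x : S × Ψ) :
    |TBstar B γ r p V₁ x - TBstar B γ r p V₂ x| ≤ γ * D := by
  simp only [TBstar_eq_iSup_iInf]
  exact abs_iSup_iInf_sub_le (mul_nonneg hγ hD)
    (fun μ b => abs_TBstarPayoff_le hγ hr hV₂ x μ b) fun μ b => abs_TBstarPayoff_sub_le hγ hV x μ b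

end Bellman

theorem TBstar_contraction_general {S A Ψ : Type*} [Fintype S] [Fintype A]
    [NormedAddCommGroup Ψ]
    (B : Set Ψ)
    (γ : ℝ) (hγ0 : 0 ≤ γ)
    (r : S × A → ℝ)
    (p : Ψ → S → A → PMF S)
    (V₁ V₂ : S × Ψ → ℝ)
    (hV₁ : ∃ C : ℝ, ∀ x, |V₁ x| ≤ C) (hV₂ : ∃ C : ℝ, ∀ x, |V₂ x| ≤ C) :
    ⨆ x : S × Ψ, |TBstar B γ r p V₁ x - TBstar B γ r p V₂ x| ≤
      γ * ⨆ x : S × Ψ, |V₁ x - V₂ x| := by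
  obtain ⟨C₁, hC₁⟩ := hV₁
  obtain ⟨C₂, hC₂⟩ := hV₂
  obtain ⟨Cr, hCr⟩ : BddAbove (range fun y => |r y|) := (finite_range _).bddAbove
  have hbdd : BddAbove (range fun x => |V₁ x - V₂ x|) :=
    ⟨C₁ + C₂, by rintro _ ⟨x, rfl⟩; exact (abs_sub _ _).trans (add_le_add (hC₁ x) (hC₂ x))⟩
  have hD : 0 ≤ ⨆ x, |V₁ x - V₂ x| := Real.iSup_nonneg fun _ => abs_nonneg _
  exact Real.iSup_le (fun x => abs_TBstar_sub_le hγ0 (fun y => hCr ⟨y, rfl⟩) hC₂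
    (fun y => le_ciSup hbdd y) hD x) (mul_nonneg hγ0 hD)

/-- The optimal time-constrained robust Bellman operator `T_B^*` is a
`γ`-contraction in the supremum norm on bounded functions `S × Ψ → ℝ`. -/
theorem TBstar_contraction {S A Ψ : Type*} [Fintype S] [Fintype A] [Nonempty S] [Nonempty A]
    [NormedAddCommGroup Ψ]
    (B : Set Ψ) (hB : B.Nonempty)
    (γ : ℝ) (hγ0 : 0 ≤ γ) (hγ1 : γ < 1)
    (r : S × A → ℝ) (hr : ∃ C : ℝ, ∀ x, |r x| ≤ C)
    (p : Ψ → S → A → PMF S)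
    (V₁ V₂ : S × Ψ → ℝ)
    (hV₁ : ∃ C : ℝ, ∀ x, |V₁ x| ≤ C) (hV₂ : ∃ C : ℝ, ∀ x, |V₂ x| ≤ C) :
    ⨆ x : S × Ψ, |TBstar B γ r p V₁ x - TBstar B γ r p V₂ x| ≤
      γ * ⨆ x : S × Ψ, |V₁ x - V₂ x| :=
  TBstar_contraction_general B γ hγ0 r p V₁ V₂ hV₁ hV₂
end
end

section
/- Let S and A be nonempty finite sets, let γ ∈ [0,1), let π : S → PMF(A) be a policy, let ρ⁰ ∈ PMF(S), let P, Q : S → A → PMF(S) be two transition kernels, and let r₁, r₂ : S × A → ℝ be reward functions with values in [0,1]. Suppose there exist L_P ≥ 0 and L_r ≥ 0 such that for every s ∈ S and a ∈ A, Σ_{s' ∈ S} |P(s,a)(s') − Q(s,a)(s')| ≤ L_P and |r₁(s,a) − r₂(s,a)| ≤ L_r. Let J(π, K, r) = Σ_{k=0}^{∞} γ^k · Σ_s μ_k^K(s) · Σ_a π(s)(a) · r(s,a) denote the expected discounted return, where μ₀^K = ρ⁰ and μ_{k+1}^K(s') = Σ_s μ_k^K(s) · Σ_a π(s)(a) ·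 K(s,a)(s'). Then |J(π, P, r₁) − J(π, Q, r₂)| ≤ L_r/(1−γ) + γ·L_P/(1−γ)². -/
/-!
By induction on `k`, the laws `μ_k^P` and `μ_k^Q` are at `ℓ¹` distance at most `k L_P`: each
step adds at most the `ℓ¹` distance between the policy-mixed kernels, which is at most `L_P`.
Hence the expected rewards at step `k` differ by at most `k L_P + L_r`, and summing against
`γ^k` gives `L_r / (1 - γ) + γ L_P / (1 - γ)²`.
-/

noncomputable section

/-- Policy-mixed one-step state-to-state kernel: `K^π(s'|s) = ∑_a π(s)(a) · K(s,a)(s')`. -/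
def kerPi {S A : Type*} [Fintype A] (π : S → PMF A) (K : S → A → PMF S)
    (s s' : S) : ℝ :=
  ∑ a : A, ((π s) a).toReal * ((K s a) s').toReal

/-- State distribution at time step `k` under policy `π`, kernel `K` and initial
distribution `ρ`: `μ₀ = ρ`, `μ_{k+1}(s') = ∑_s μ_k(s) · ∑_a π(s)(a) · K(s,a)(s')`. -/
def stateDist {S A : Type*} [Fintype S] [Fintype A] (π : S → PMF A)
    (K : S → A → PMF S) (ρ : PMF S) : ℕ → S → ℝ
  | 0 => fun s => (ρ s).toReal
  | (k + 1) => fun s' => ∑ s : S, stateDist π K ρ k s * kerPi π K s s'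

/-- Discounted state occupancy measure `d^π(s) = (1-γ) ∑_{k≥0} γ^k μ_k(s)`. -/
def occ {S A : Type*} [Fintype S] [Fintype A] (γ : ℝ) (π : S → PMF A)
    (K : S → A → PMF S) (ρ : PMF S) (s : S) : ℝ :=
  (1 - γ) * ∑' k : ℕ, γ ^ k * stateDist π K ρ k s

/-- Expected discounted return
`J(π, K, r) = ∑_{k≥0} γ^k ∑_s μ_k(s) ∑_a π(s)(a) r(s,a)`. -/
def ret {S A : Type*} [Fintype S] [Fintype A] (γ : ℝ) (π : S → PMF A)
    (K : S → A → PMF S) (ρ : PMF S) (r : S × A → ℝ) : ℝ :=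
  ∑' k : ℕ, γ ^ k * ∑ s : S, stateDist π K ρ k s * ∑ a : A, ((π s) a).toReal * r (s, a)

def rewardPi {S A : Type*} [Fintype A] (π : S → PMF A) (r : S × A → ℝ) (s : S) : ℝ :=
  ∑ a : A, ((π s) a).toReal * r (s, a)

def expectedReward {S A : Type*} [Fintype S] [Fintype A] (π : S → PMF A)
    (K : S → A → PMF S) (ρ : PMF S) (r : S × A → ℝ) (k : ℕ) : ℝ :=
  ∑ s : S, stateDist π K ρ k s * rewardPi π r s

theorem ret_eq_tsum {S A : Type*} [Fintype S] [Fintype A] (γ : ℝ) (π : S → PMF A)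
    (K : S → A → PMF S) (ρ : PMF S) (r : S × A → ℝ) :
    ret γ π K ρ r = ∑' k : ℕ, γ ^ k * expectedReward π K ρ r k :=
  rfl

theorem PMF.sum_toReal {X : Type*} [Fintype X] (p : PMF X) : ∑ x : X, (p x).toReal = 1 := by
  rw [← ENNReal.toReal_sum fun x _ => p.apply_ne_top x,
    ← tsum_fintype (L := SummationFilter.unconditional X), p.tsum_coe, ENNReal.toReal_one]

section WeightedSums

open Finset

variable {ι κ : Type*} [Fintype ι] [Fintype κ]

theorem sum_mul_le_of_le {w f : ι → ℝ} {C : ℝ} (hw : ∀ i, 0 ≤ w i) (hw1 : ∑ i, w i = 1)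
    (hf : ∀ i, f i ≤ C) : ∑ i, w i * f i ≤ C :=
  calc ∑ i, w i * f i ≤ ∑ i, w i * C := sum_le_sum fun i _ => mul_le_mul_of_nonneg_left (hf i) (hw i)
    _ = C := by rw [← sum_mul, hw1, one_mul]

theorem abs_sum_mul_le_of_abs_le {w f : ι → ℝ} {C : ℝ} (hw : ∀ i, 0 ≤ w i)
    (hw1 : ∑ i, w i = 1) (hf : ∀ i, |f i| ≤ C) : |∑ i, w i * f i| ≤ C :=
  (abs_sum_le_sum_abs _ _).trans <| by
    simpa only [abs_mul, abs_of_nonneg (hw _)] using sum_mul_le_of_le hw hw1 hf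

theorem abs_sum_mul_le_mul_sum_abs (μ f : ι → ℝ) {C : ℝ} (hf : ∀ i, |f i| ≤ C) :
    |∑ i, μ i * f i| ≤ C * ∑ i, |μ i| :=
  calc |∑ i, μ i * f i| ≤ ∑ i, |μ i| * C :=
        (abs_sum_le_sum_abs _ _).trans <| sum_le_sum fun i _ => by
          rw [abs_mul]; exact mul_le_mul_of_nonneg_left (hf i) (abs_nonneg _)
    _ = C * ∑ i, |μ i| := by rw [← sum_mul, mul_comm]

theorem sum_abs_sum_mul_le (μ : ι → ℝ) (M : ι → κ → ℝ) :
    ∑ j, |∑ i, μ i * M i j| ≤ ∑ i, |μ i| * ∑ j, |M i j| :=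
  calc ∑ j, |∑ i, μ i * M i j| ≤ ∑ j, ∑ i, |μ i| * |M i j| :=
        sum_le_sum fun j _ => (abs_sum_le_sum_abs _ _).trans_eq (by simp only [abs_mul])
    _ = ∑ i, |μ i| * ∑ j, |M i j| := by rw [sum_comm]; simp only [mul_sum]

theorem sum_mul_sub_sum_mul (μ ν f g : ι → ℝ) :
    ∑ i, μ i * f i - ∑ i, ν i * g i = ∑ i, (μ i - ν i) * f i + ∑ i, ν i * (f i - g i) := by
  rw [← sum_sub_distrib, ← sum_add_distrib]
  exact sum_congr rfl fun i _ => by ring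

/-- For stochastic `M` and a probability vector `ν`: one step of two Markov chains increases
the `ℓ¹` distance of their laws by at most the `ℓ¹` distance of their transition rows. -/
theorem sum_abs_sum_mul_sub_sum_mul_le {μ ν : ι → ℝ} {M N : ι → κ → ℝ} {L : ℝ}
    (hM : ∀ i j, 0 ≤ M i j) (hM1 : ∀ i, ∑ j, M i j = 1)
    (hν : ∀ i, 0 ≤ ν i) (hν1 : ∑ i, ν i = 1) (hMN : ∀ i, ∑ j, |M i j - N i j| ≤ L) :
    ∑ j, |∑ i, μ i * M i j - ∑ i, ν i * N i j| ≤ ∑ i, |μ i - ν i| + L := by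
  calc ∑ j, |∑ i, μ i * M i j - ∑ i, ν i * N i j|
      ≤ ∑ j, (|∑ i, (μ i - ν i) * M i j| + |∑ i, ν i * (M i j - N i j)|) :=
        sum_le_sum fun j _ => by rw [sum_mul_sub_sum_mul]; exact abs_add_le _ _
    _ ≤ ∑ i, |μ i - ν i| * ∑ j, |M i j| + ∑ i, |ν i| * ∑ j, |M i j - N i j| := by
        rw [sum_add_distrib]
        exact add_le_add (sum_abs_sum_mul_le _ _) (sum_abs_sum_mul_le _ _)
    _ ≤ ∑ i, |μ i - ν i| + L := by
        simp only [abs_of_nonneg (hM _ _), hM1, mul_one, abs_of_nonneg (hν _)]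
        exact add_le_add_right (sum_mul_le_of_le hν hν1 hMN) _

end WeightedSums

section MarkovChain

variable {S A : Type*} [Fintype A] (π : S → PMF A)

theorem kerPi_nonneg (K : S → A → PMF S) (s s' : S) : 0 ≤ kerPi π K s s' :=
  Finset.sum_nonneg fun _ _ => mul_nonneg ENNReal.toReal_nonneg ENNReal.toReal_nonneg

theorem abs_rewardPi_le {r : S × A → ℝ} {C : ℝ} (hr : ∀ x, |r x| ≤ C) (s : S) :
    |rewardPi π r s| ≤ C :=
  abs_sum_mul_le_of_abs_le (fun _ => ENNReal.toReal_nonneg) (π s).sum_toReal fun a => hr (s, a)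

theorem abs_rewardPi_sub_le {r₁ r₂ : S × A → ℝ} {L : ℝ}
    (hr : ∀ s a, |r₁ (s, a) - r₂ (s, a)| ≤ L) (s : S) :
    |rewardPi π r₁ s - rewardPi π r₂ s| ≤ L := by
  rw [rewardPi, rewardPi, ← Finset.sum_sub_distrib]
  simp only [← mul_sub]
  exact abs_sum_mul_le_of_abs_le (fun _ => ENNReal.toReal_nonneg) (π s).sum_toReal (hr s)

variable [Fintype S]

theorem sum_kerPi (K : S → A → PMF S) (s : S) : ∑ s' : S, kerPi π K s s' = 1 := by
  unfold kerPi
  rw [Finset.sum_comm]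
  simp only [← Finset.mul_sum, PMF.sum_toReal, mul_one]

theorem sum_abs_kerPi_sub_le {P Q : S → A → PMF S} {L : ℝ}
    (hPQ : ∀ s a, ∑ s' : S, |((P s a) s').toReal - ((Q s a) s').toReal| ≤ L) (s : S) :
    ∑ s' : S, |kerPi π P s s' - kerPi π Q s s'| ≤ L := by
  have hdiff : ∀ s', kerPi π P s s' - kerPi π Q s s'
      = ∑ a, ((π s) a).toReal * (((P s a) s').toReal - ((Q s a) s').toReal) := fun s' => by
    simp only [kerPi, mul_sub, Finset.sum_sub_distrib]
  simp only [hdiff]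
  refine (sum_abs_sum_mul_le _ _).trans ?_
  simpa only [abs_of_nonneg ENNReal.toReal_nonneg] using
    sum_mul_le_of_le (fun _ => ENNReal.toReal_nonneg) (π s).sum_toReal (hPQ s)

theorem stateDist_nonneg (K : S → A → PMF S) (ρ : PMF S) (k : ℕ) (s : S) :
    0 ≤ stateDist π K ρ k s := by
  induction k generalizing s with
  | zero => exact ENNReal.toReal_nonneg
  | succ k ih => exact Finset.sum_nonneg fun s _ => mul_nonneg (ih s) (kerPi_nonneg π K s _)

theorem sum_stateDist (K : S → A → PMF S) (ρ : PMF S) (k : ℕ) :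
    ∑ s : S, stateDist π K ρ k s = 1 := by
  induction k with
  | zero => exact ρ.sum_toReal
  | succ k ih =>
    simp only [stateDist]
    rw [Finset.sum_comm]
    simp only [← Finset.mul_sum, sum_kerPi, mul_one, ih]

theorem sum_abs_stateDist_sub_le {P Q : S → A → PMF S} (ρ : PMF S) {L : ℝ}
    (hPQ : ∀ s, ∑ s' : S, |kerPi π P s s' - kerPi π Q s s'| ≤ L) (k : ℕ) :
    ∑ s : S, |stateDist π P ρ k s - stateDist π Q ρ k s| ≤ k * L := by
  induction k with
  | zero => simp [stateDist]
  | succ k ih =>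
    calc ∑ s : S, |stateDist π P ρ (k + 1) s - stateDist π Q ρ (k + 1) s|
        ≤ ∑ s : S, |stateDist π P ρ k s - stateDist π Q ρ k s| + L :=
          sum_abs_sum_mul_sub_sum_mul_le (kerPi_nonneg π P) (sum_kerPi π P)
            (stateDist_nonneg π Q ρ k) (sum_stateDist π Q ρ k) hPQ
      _ ≤ (k + 1 : ℕ) * L := by push_cast; linarith

theorem abs_expectedReward_le (K : S → A → PMF S) (ρ : PMF S) {r : S × A → ℝ} {C : ℝ}
    (hr : ∀ x, |r x| ≤ C) (k : ℕ) : |expectedReward π K ρ r k| ≤ C :=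
  abs_sum_mul_le_of_abs_le (stateDist_nonneg π K ρ k) (sum_stateDist π K ρ k)
    (abs_rewardPi_le π hr)

theorem abs_expectedReward_sub_le {P Q : S → A → PMF S} (ρ : PMF S) {r₁ r₂ : S × A → ℝ}
    {L_P L_r : ℝ} (hPQ : ∀ s, ∑ s' : S, |kerPi π P s s' - kerPi π Q s s'| ≤ L_P)
    (hr₁ : ∀ x, |r₁ x| ≤ 1) (hr : ∀ s a, |r₁ (s, a) - r₂ (s, a)| ≤ L_r) (k : ℕ) :
    |expectedReward π P ρ r₁ k - expectedReward π Q ρ r₂ k| ≤ k * L_P + L_r := by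
  rw [expectedReward, expectedReward, sum_mul_sub_sum_mul]
  refine (abs_add_le _ _).trans (add_le_add ?_ ?_)
  · calc _ ≤ 1 * ∑ s : S, |stateDist π P ρ k s - stateDist π Q ρ k s| :=
          abs_sum_mul_le_mul_sum_abs _ _ (abs_rewardPi_le π hr₁)
      _ ≤ k * L_P := by rw [one_mul]; exact sum_abs_stateDist_sub_le π ρ hPQ k
  · exact abs_sum_mul_le_of_abs_le (stateDist_nonneg π Q ρ k) (sum_stateDist π Q ρ k)
      (abs_rewardPi_sub_le π hr)

theorem summable_geometric_mul_expectedReward {γ : ℝ} (hγ0 : 0 ≤ γ) (hγ1 : γ < 1)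
    (K : S → A → PMF S) (ρ : PMF S) {r : S × A → ℝ} {C : ℝ} (hr : ∀ x, |r x| ≤ C) :
    Summable fun k : ℕ => γ ^ k * expectedReward π K ρ r k :=
  .of_norm_bounded ((summable_geometric_of_lt_one hγ0 hγ1).mul_right C) fun k => by
    rw [norm_mul, norm_pow, Real.norm_of_nonneg hγ0]
    exact mul_le_mul_of_nonneg_left (abs_expectedReward_le π K ρ hr k) (pow_nonneg hγ0 k)

end MarkovChain

theorem hasSum_geometric_mul_linear {γ : ℝ} (hγ0 : 0 ≤ γ) (hγ1 : γ < 1) (a b : ℝ) :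
    HasSum (fun k : ℕ => γ ^ k * (k * a + b)) (b / (1 - γ) + γ * a / (1 - γ) ^ 2) := by
  have hγ : ‖γ‖ < 1 := by rwa [Real.norm_of_nonneg hγ0]
  have h := ((hasSum_geometric_of_lt_one hγ0 hγ1).mul_left b).add
    ((hasSum_coe_mul_geometric_of_norm_lt_one hγ).mul_left a)
  rw [show b / (1 - γ) + γ * a / (1 - γ) ^ 2 = b * (1 - γ)⁻¹ + a * (γ / (1 - γ) ^ 2) by ring,
    show (fun k : ℕ => γ ^ k * (k * a + b)) = fun k : ℕ => b * γ ^ k + a * (k * γ ^ k) by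
      funext k; ring]
  exact h

theorem ret_abs_sub_le_general {S A : Type*} [Fintype S] [Fintype A]
    (γ : ℝ) (hγ0 : 0 ≤ γ) (hγ1 : γ < 1)
    (π : S → PMF A) (ρ : PMF S)
    (P Q : S → A → PMF S) (r₁ r₂ : S × A → ℝ)
    (hr₁ : ∀ x, r₁ x ∈ Set.Icc (0 : ℝ) 1) (hr₂ : ∀ x, r₂ x ∈ Set.Icc (0 : ℝ) 1)
    (L_P L_r : ℝ)
    (hP : ∀ s : S, ∀ a : A, ∑ s' : S, |((P s a) s').toReal - ((Q s a) s').toReal| ≤ L_P)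
    (hr : ∀ s : S, ∀ a : A, |r₁ (s, a) - r₂ (s, a)| ≤ L_r) :
    |ret γ π P ρ r₁ - ret γ π Q ρ r₂| ≤ L_r / (1 - γ) + γ * L_P / (1 - γ) ^ 2 := by
  have abs_le_one : ∀ r : S × A → ℝ, (∀ x, r x ∈ Set.Icc (0 : ℝ) 1) → ∀ x, |r x| ≤ 1 :=
    fun r h x => abs_le.2 ⟨by linarith [(h x).1], (h x).2⟩
  rw [ret_eq_tsum, ret_eq_tsum,
    ← (summable_geometric_mul_expectedReward π hγ0 hγ1 P ρ (abs_le_one r₁ hr₁)).tsum_sub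
      (summable_geometric_mul_expectedReward π hγ0 hγ1 Q ρ (abs_le_one r₂ hr₂)),
    ← Real.norm_eq_abs]
  refine tsum_of_norm_bounded (hasSum_geometric_mul_linear hγ0 hγ1 L_P L_r) fun k => ?_
  rw [← mul_sub, norm_mul, norm_pow, Real.norm_of_nonneg hγ0]
  exact mul_le_mul_of_nonneg_left (abs_expectedReward_sub_le π ρ (sum_abs_kerPi_sub_le π hP)
    (abs_le_one r₁ hr₁) hr k) (pow_nonneg hγ0 k)

/-- One-step simulation bound: if the kernels differ by at most `L_P` in
per-(s,a) ℓ₁ distance and the `[0,1]`-valued rewards by at most `L_r` pointwise, then the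
expected discounted returns differ by at most `L_r/(1-γ) + γ L_P/(1-γ)²`. -/
theorem ret_abs_sub_le {S A : Type*} [Fintype S] [Fintype A] [Nonempty S] [Nonempty A]
    (γ : ℝ) (hγ0 : 0 ≤ γ) (hγ1 : γ < 1)
    (π : S → PMF A) (ρ : PMF S)
    (P Q : S → A → PMF S) (r₁ r₂ : S × A → ℝ)
    (hr₁ : ∀ x, r₁ x ∈ Set.Icc (0 : ℝ) 1) (hr₂ : ∀ x, r₂ x ∈ Set.Icc (0 : ℝ) 1)
    (L_P L_r : ℝ) (hLP : 0 ≤ L_P) (hLr : 0 ≤ L_r)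
    (hP : ∀ s : S, ∀ a : A, ∑ s' : S, |((P s a) s').toReal - ((Q s a) s').toReal| ≤ L_P)
    (hr : ∀ s : S, ∀ a : A, |r₁ (s, a) - r₂ (s, a)| ≤ L_r) :
    |ret γ π P ρ r₁ - ret γ π Q ρ r₂| ≤ L_r / (1 - γ) + γ * L_P / (1 - γ) ^ 2 :=
  ret_abs_sub_le_general γ hγ0 hγ1 π ρ P Q r₁ r₂ hr₁ hr₂ L_P L_r hP hr
end
end
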